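/- arXiv:2603.07133 — 13 statements merged into one kernel-verified Lean document; each statement's English description precedes it below -/
import Mathlib

section
/- Let A be an n×n invertible symmetric real matrix, J a p×p symmetric real matrix with J·J = I_p, and ρ > 0. For any n×p real matrix X such that XᵀX and XᵀAX are invertible, the matrix G¹_X := ρ⁻¹·A X Xᵀ A + (A − A X J Xᵀ A)·(A − A X J Xᵀ A) is symmetric positive definite. -/
/-!
With `C = XᵀA` and `B = A − AXJXᵀA` (symmetric because `A` and `J` are), the matrix is
`ρ⁻¹ CᵀC + BᵀB`, a sum of two positive semidefinite Gram matrices. It is definite because a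
vector killed by both `C` and `B` is killed by `A = B + AXJ · C`, hence is zero.
-/

open Matrix

namespace Matrix

variable {m k n : Type*} [Fintype m] [Fintype k] [Fintype n]

theorem posDef_conjTranspose_mul_self_add_conjTranspose_mul_self {R : Type*} [CommRing R]
    [PartialOrder R] [StarRing R] [StarOrderedRing R] [NoZeroDivisors R] {C : Matrix m n R}
    {B : Matrix k n R} (h : ∀ v, C *ᵥ v = 0 → B *ᵥ v = 0 → v = 0) :
    (Cᴴ * C + Bᴴ * B).PosDef := by
  rw [← fromCols_mul_fromRows, ← conjTranspose_fromRows_eq_fromCols_conjTranspose]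
  refine PosDef.conjTranspose_mul_self _ ?_
  rw [← coe_mulVecLin, ← LinearMap.ker_eq_bot, ker_mulVecLin_eq_bot_iff]
  intro v hv
  rw [fromRows_mulVec] at hv
  exact h v (funext fun i => congr_fun hv (.inl i)) (funext fun i => congr_fun hv (.inr i))

theorem posDef_smul_transpose_mul_self_add_transpose_mul_self {c : ℝ} (hc : 0 < c)
    {C : Matrix m n ℝ} {B : Matrix k n ℝ} (h : ∀ v, C *ᵥ v = 0 → B *ᵥ v = 0 → v = 0) :
    (c • (Cᵀ * C) + Bᵀ * B).PosDef := by
  have hsqrt : √c ≠ 0 := (Real.sqrt_pos.mpr hc).ne'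
  have hscale : c • (Cᵀ * C) = (√c • C)ᴴ * (√c • C) := by
    rw [conjTranspose_smul, conjTranspose_eq_transpose_of_trivial, star_trivial,
      Matrix.smul_mul, Matrix.mul_smul, smul_smul, Real.mul_self_sqrt hc.le]
  rw [hscale, ← conjTranspose_eq_transpose_of_trivial B]
  refine posDef_conjTranspose_mul_self_add_conjTranspose_mul_self fun v hCv hBv => h v ?_ hBv
  rwa [smul_mulVec, smul_eq_zero_iff_right hsqrt] at hCv

theorem eq_zero_of_mulVec_eq_zero_of_sub_mul_mulVec_eq_zero {K : Type*} [Field K] [DecidableEq n]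
    {A : Matrix n n K} (hA : IsUnit A) (M : Matrix n m K) {C : Matrix m n K} {v : n → K}
    (hC : C *ᵥ v = 0) (hB : (A - M * C) *ᵥ v = 0) : v = 0 := by
  rw [sub_mulVec, ← mulVec_mulVec, hC, mulVec_zero, sub_zero] at hB
  exact mulVec_injective_iff_isUnit.mpr hA (hB.trans (mulVec_zero A).symm)

end Matrix

theorem G1_posDef_general
    (n p : ℕ)
    (A : Matrix (Fin n) (Fin n) ℝ) (hA : Aᵀ = A) (hAinv : IsUnit A)
    (J : Matrix (Fin p) (Fin p) ℝ) (hJ : Jᵀ = J)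
    (ρ : ℝ) (hρ : 0 < ρ)
    (X : Matrix (Fin n) (Fin p) ℝ) :
    (ρ⁻¹ • (A * X * Xᵀ * A) +
      (A - A * X * J * Xᵀ * A) * (A - A * X * J * Xᵀ * A)).PosDef := by
  set B := A - A * X * J * Xᵀ * A
  have hAXXA : A * X * Xᵀ * A = (Xᵀ * A)ᵀ * (Xᵀ * A) := by
    simp only [transpose_mul, transpose_transpose, hA, Matrix.mul_assoc]
  have hB_eq : B = A - (A * X * J) * (Xᵀ * A) := by simp only [B, Matrix.mul_assoc]
  have hB_symm : Bᵀ = B := by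
    simp only [B, transpose_sub, transpose_mul, transpose_transpose, hA, hJ, Matrix.mul_assoc]
  nth_rw 1 [hAXXA, ← hB_symm]
  refine posDef_smul_transpose_mul_self_add_transpose_mul_self (C := Xᵀ * A) (B := B)
    (inv_pos.mpr hρ) fun v hCv hBv =>
      eq_zero_of_mulVec_eq_zero_of_sub_mul_mulVec_eq_zero hAinv (A * X * J) hCv ?_
  rwa [hB_eq] at hBv

/-- For `X ∈ E` (i.e. `XᵀX` and `XᵀAX` invertible), the metric matrix
`G¹_X = ρ⁻¹·AXXᵀA + (A − AXJXᵀA)²` is symmetric positive definite. -/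
theorem G1_posDef
    (n p : ℕ) (hpn : p ≤ n)
    (A : Matrix (Fin n) (Fin n) ℝ) (hA : Aᵀ = A) (hAinv : IsUnit A)
    (J : Matrix (Fin p) (Fin p) ℝ) (hJ : Jᵀ = J) (hJ2 : J * J = 1)
    (ρ : ℝ) (hρ : 0 < ρ)
    (X : Matrix (Fin n) (Fin p) ℝ)
    (hX1 : IsUnit (Xᵀ * X)) (hX2 : IsUnit (Xᵀ * A * X)) :
    (ρ⁻¹ • (A * X * Xᵀ * A) +
      (A - A * X * J * Xᵀ * A) * (A - A * X * J * Xᵀ * A)).PosDef :=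
  G1_posDef_general n p A hA hAinv J hJ ρ hρ X
end

section
/- Let A be an n×n invertible symmetric real matrix, J a p×p symmetric real matrix with J·J = I_p, and ρ > 0. For any n×p real matrix X such that XᵀX and XᵀAX are invertible, the matrix G²_X := ρ⁻¹·A X Xᵀ A + I_n − X (XᵀX)⁻¹ Xᵀ is symmetric positive definite. -/
/-!
Write `P = X(XᵀX)⁻¹Xᵀ` for the orthogonal projector onto the column space of `X`. Then
`G²_X = ρ⁻¹ (XᵀA)ᵀ(XᵀA) + (I - P)` is a sum of two positive semidefinite matrices, so it is
positive definite as soon as their kernels meet trivially. A vector killed by `I - P` lies in the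
column space, `x = Xw`, and if it is also killed by `XᵀA` then `(XᵀAX) w = 0`, so `w = 0`.
-/

open Matrix

namespace Matrix

open scoped ComplexOrder

variable {n p 𝕜 : Type*} [Fintype n] [Fintype p]

theorem PosSemidef.posDef_add_of_mulVec_eq_zero [RCLike 𝕜] {S T : Matrix n n 𝕜}
    (hS : S.PosSemidef) (hT : T.PosSemidef) (h : ∀ x, S *ᵥ x = 0 → T *ᵥ x = 0 → x = 0) :
    (S + T).PosDef := by
  refine .of_dotProduct_mulVec_pos (hS.isHermitian.add hT.isHermitian) fun x hx => ?_
  have hSx := hS.dotProduct_mulVec_nonneg x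
  have hTx := hT.dotProduct_mulVec_nonneg x
  rw [add_mulVec, dotProduct_add]
  refine (add_nonneg hSx hTx).lt_of_ne' fun hsum => hx (h x ?_ ?_)
  · exact (hS.dotProduct_mulVec_zero_iff x).1 ((add_eq_zero_iff_of_nonneg hSx hTx).1 hsum).1
  · exact (hT.dotProduct_mulVec_zero_iff x).1 ((add_eq_zero_iff_of_nonneg hSx hTx).1 hsum).2

theorem IsStarProjection.posSemidef [RCLike 𝕜] {Q : Matrix n n 𝕜} (hQ : IsStarProjection Q) :
    Q.PosSemidef := by
  open scoped MatrixOrder in exact hQ.nonneg.posSemidef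

variable [DecidableEq p] {R : Type*} [CommRing R] [StarRing R]

theorem isStarProjection_mul_inv_mul_conjTranspose {X : Matrix n p R} (hX : IsUnit (Xᴴ * X)) :
    IsStarProjection (X * (Xᴴ * X)⁻¹ * Xᴴ) where
  isIdempotentElem := by
    rw [IsIdempotentElem]
    calc X * (Xᴴ * X)⁻¹ * Xᴴ * (X * (Xᴴ * X)⁻¹ * Xᴴ)
        = X * ((Xᴴ * X)⁻¹ * (Xᴴ * X)) * (Xᴴ * X)⁻¹ * Xᴴ := by simp only [Matrix.mul_assoc]
      _ = X * (Xᴴ * X)⁻¹ * Xᴴ := by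
        rw [nonsing_inv_mul _ ((isUnit_iff_isUnit_det _).1 hX), Matrix.mul_one]
  isSelfAdjoint := by
    simp only [IsSelfAdjoint, star_eq_conjTranspose, conjTranspose_mul, conjTranspose_conjTranspose,
      conjTranspose_nonsing_inv, Matrix.mul_assoc]

theorem exists_mulVec_eq_of_one_sub_mul_inv_mul_conjTranspose_mulVec_eq_zero
    [DecidableEq n] (X : Matrix n p R) {x : n → R} (hx : (1 - X * (Xᴴ * X)⁻¹ * Xᴴ) *ᵥ x = 0) :
    ∃ w, X *ᵥ w = x :=
  ⟨((Xᴴ * X)⁻¹ * Xᴴ) *ᵥ x, by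
    rwa [sub_mulVec, one_mulVec, sub_eq_zero, eq_comm, Matrix.mul_assoc, ← mulVec_mulVec] at hx⟩

end Matrix

theorem G2_posDef_general
    (n p : ℕ)
    (A : Matrix (Fin n) (Fin n) ℝ) (hA : Aᵀ = A)
    (ρ : ℝ) (hρ : 0 < ρ)
    (X : Matrix (Fin n) (Fin p) ℝ)
    (hX1 : IsUnit (Xᵀ * X)) (hX2 : IsUnit (Xᵀ * A * X)) :
    (ρ⁻¹ • (A * X * Xᵀ * A) + 1 - X * (Xᵀ * X)⁻¹ * Xᵀ).PosDef := by
  simp only [← conjTranspose_eq_transpose_of_trivial] at *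
  have hG : ρ⁻¹ • (A * X * Xᴴ * A) + 1 - X * (Xᴴ * X)⁻¹ * Xᴴ
      = ρ⁻¹ • ((Xᴴ * A)ᴴ * (Xᴴ * A)) + (1 - X * (Xᴴ * X)⁻¹ * Xᴴ) := by
    rw [conjTranspose_mul, hA, conjTranspose_conjTranspose, add_sub_assoc]
    simp only [Matrix.mul_assoc]
  rw [hG]
  refine ((posSemidef_conjTranspose_mul_self _).smul
    (inv_nonneg.2 hρ.le)).posDef_add_of_mulVec_eq_zero
    (isStarProjection_mul_inv_mul_conjTranspose hX1).one_sub.posSemidef fun x hAx hPx => ?_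
  obtain ⟨w, rfl⟩ := exists_mulVec_eq_of_one_sub_mul_inv_mul_conjTranspose_mulVec_eq_zero X hPx
  rw [smul_mulVec, smul_eq_zero_iff_right (inv_ne_zero hρ.ne'),
    conjTranspose_mul_self_mulVec_eq_zero, mulVec_mulVec] at hAx
  rw [(mulVec_injective_iff_isUnit.2 hX2) (hAx.trans (mulVec_zero _).symm), mulVec_zero]

/-- For `X ∈ E` (i.e. `XᵀX` and `XᵀAX` invertible), the metric matrix
`G²_X = ρ⁻¹·AXXᵀA + I_n − X(XᵀX)⁻¹Xᵀ` is symmetric positive definite. -/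
theorem G2_posDef
    (n p : ℕ) (hpn : p ≤ n)
    (A : Matrix (Fin n) (Fin n) ℝ) (hA : Aᵀ = A) (hAinv : IsUnit A)
    (J : Matrix (Fin p) (Fin p) ℝ) (hJ : Jᵀ = J) (hJ2 : J * J = 1)
    (ρ : ℝ) (hρ : 0 < ρ)
    (X : Matrix (Fin n) (Fin p) ℝ)
    (hX1 : IsUnit (Xᵀ * X)) (hX2 : IsUnit (Xᵀ * A * X)) :
    (ρ⁻¹ • (A * X * Xᵀ * A) + 1 - X * (Xᵀ * X)⁻¹ * Xᵀ).PosDef :=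
  G2_posDef_general n p A hA ρ hρ X hX1 hX2
end

section
/- Let A be an n×n invertible symmetric real matrix, J a p×p symmetric real matrix with J·J = I_p, and ρ > 0. For any n×p real matrix X with XᵀAX = J, set S_X := A − A X J Xᵀ A and Π_X := I_n − X (XᵀX)⁻¹ Xᵀ. Then the matrix G¹_X := ρ⁻¹·A X Xᵀ A + S_X·S_X is invertible with inverse (G¹_X)⁻¹ = ρ·X Xᵀ + A⁻¹ Π_X A⁻¹; that is, (ρ⁻¹·A X Xᵀ A + S_X·S_X)·(ρ·X Xᵀ + A⁻¹ Π_X A⁻¹) = I_n. -/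
/-!
Since `XᵀAX = J` and `J² = 1`, `J Xᵀ A` is a left inverse of `X`, so `XᵀX` is invertible and
`Xᵀ Π_X = 0`; moreover `S_X X = 0`. Expanding the product, both cross terms vanish and
`ρ⁻¹ AXXᵀA · ρ XXᵀ = AXJXᵀ`. In the last term `S_X A⁻¹ = 1 - AXJXᵀ` fixes `Π_X` on the left
(as `Xᵀ Π_X = 0`) and `Π_X` fixes `S_X` on the right (as `S_X X = 0`), so
`S_X² A⁻¹Π_XA⁻¹ = S_X A⁻¹ = 1 - AXJXᵀ` and the sum is `1`.
-/

open Matrix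

namespace Matrix

variable {m n 𝕜 : Type*} [Fintype m] [Fintype n] [DecidableEq n] [Field 𝕜]

theorem isUnit_det_transpose_mul_self_of_mul_eq_one {X : Matrix m n ℝ} {L : Matrix n m ℝ}
    (hLX : L * X = 1) : IsUnit (Xᵀ * X).det := by
  have hX : Function.Injective X.mulVec :=
    Function.LeftInverse.injective (g := L.mulVec) fun v => by rw [mulVec_mulVec, hLX, one_mulVec]
  rw [← isUnit_iff_isUnit_det, ← conjTranspose_eq_transpose_of_trivial]
  exact (PosDef.conjTranspose_mul_self X hX).isUnit

theorem transpose_mul_one_sub_proj [DecidableEq m] {X : Matrix m n 𝕜}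
    (hX : IsUnit (Xᵀ * X).det) : Xᵀ * (1 - X * (Xᵀ * X)⁻¹ * Xᵀ) = 0 := by
  rw [Matrix.mul_sub, Matrix.mul_one, ← Matrix.mul_assoc, ← Matrix.mul_assoc,
    mul_nonsing_inv _ hX, Matrix.one_mul, sub_self]

theorem mul_one_sub_proj_of_mul_eq_zero [DecidableEq m] {M : Matrix m m 𝕜} {X : Matrix m n 𝕜}
    (hMX : M * X = 0) : M * (1 - X * (Xᵀ * X)⁻¹ * Xᵀ) = M := by
  rw [Matrix.mul_sub, Matrix.mul_one, Matrix.mul_assoc, ← Matrix.mul_assoc M, hMX,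
    Matrix.zero_mul, sub_zero]

variable {A : Matrix m m 𝕜} {X : Matrix m n 𝕜} {J : Matrix n n 𝕜}

theorem sub_mul_transpose_mul_mul_eq_zero (hX : Xᵀ * A * X = J) (hJ : J * J = 1) :
    (A - A * X * J * Xᵀ * A) * X = 0 := by
  rw [Matrix.sub_mul, show A * X * J * Xᵀ * A * X = A * X * (J * (Xᵀ * A * X)) by
    simp only [Matrix.mul_assoc], hX, hJ, Matrix.mul_one, sub_self]

theorem G1_mul_eq_one [DecidableEq m] (hA : IsUnit A.det) (hX : Xᵀ * A * X = J) (hJ : J * J = 1)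
    (hXX : IsUnit (Xᵀ * X).det) {ρ : 𝕜} (hρ : ρ ≠ 0) :
    (ρ⁻¹ • (A * X * Xᵀ * A) + (A - A * X * J * Xᵀ * A) * (A - A * X * J * Xᵀ * A)) *
      (ρ • (X * Xᵀ) + A⁻¹ * (1 - X * (Xᵀ * X)⁻¹ * Xᵀ) * A⁻¹) = 1 := by
  set S := A - A * X * J * Xᵀ * A
  set Pi := 1 - X * (Xᵀ * X)⁻¹ * Xᵀ
  have hSX : S * X = 0 := sub_mul_transpose_mul_mul_eq_zero hX hJ
  have hXPi : Xᵀ * Pi = 0 := transpose_mul_one_sub_proj hXX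
  have hSA : S * A⁻¹ = 1 - A * X * J * Xᵀ := by
    rw [sub_mul, mul_nonsing_inv _ hA, Matrix.mul_assoc _ A, mul_nonsing_inv _ hA,
      Matrix.mul_one]
  have hQPi : (1 - A * X * J * Xᵀ) * Pi = Pi := by
    rw [sub_mul, Matrix.one_mul, Matrix.mul_assoc, hXPi, Matrix.mul_zero, sub_zero]
  have h₁ : A * X * Xᵀ * A * (X * Xᵀ) = A * X * J * Xᵀ := by
    rw [show A * X * Xᵀ * A * (X * Xᵀ) = A * X * (Xᵀ * A * X) * Xᵀ by
      simp only [Matrix.mul_assoc], hX]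
  have h₂ : A * X * Xᵀ * A * (A⁻¹ * Pi * A⁻¹) = 0 := by
    rw [show A * X * Xᵀ * A * (A⁻¹ * Pi * A⁻¹) = A * X * (Xᵀ * (A * A⁻¹) * Pi) * A⁻¹ by
      simp only [Matrix.mul_assoc], mul_nonsing_inv _ hA, Matrix.mul_one, hXPi]
    simp only [Matrix.mul_zero, Matrix.zero_mul]
  have h₃ : S * S * (X * Xᵀ) = 0 := by
    rw [Matrix.mul_assoc, ← Matrix.mul_assoc S X, hSX, Matrix.zero_mul, Matrix.mul_zero]
  have h₄ : S * S * (A⁻¹ * Pi * A⁻¹) = 1 - A * X * J * Xᵀ :=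
    calc S * S * (A⁻¹ * Pi * A⁻¹) = S * (S * A⁻¹ * Pi) * A⁻¹ := by simp only [Matrix.mul_assoc]
      _ = S * Pi * A⁻¹ := by rw [hSA, hQPi]
      _ = S * A⁻¹ := by rw [mul_one_sub_proj_of_mul_eq_zero hSX]
      _ = 1 - A * X * J * Xᵀ := hSA
  rw [add_mul, mul_add, mul_add, smul_mul_smul, inv_mul_cancel₀ hρ, one_smul, smul_mul_assoc,
    mul_smul_comm, h₁, h₂, h₃, h₄, smul_zero, smul_zero, add_zero, zero_add, add_sub_cancel]

end Matrix

theorem G1_inverse_general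
    (n p : ℕ)
    (A : Matrix (Fin n) (Fin n) ℝ) (hAinv : IsUnit A)
    (J : Matrix (Fin p) (Fin p) ℝ) (hJ2 : J * J = 1)
    (ρ : ℝ) (hρ : 0 < ρ)
    (X : Matrix (Fin n) (Fin p) ℝ) (hX : Xᵀ * A * X = J)
    (S : Matrix (Fin n) (Fin n) ℝ) (hS : S = A - A * X * J * Xᵀ * A)
    (Pi : Matrix (Fin n) (Fin n) ℝ) (hPi : Pi = 1 - X * (Xᵀ * X)⁻¹ * Xᵀ) :
    IsUnit (ρ⁻¹ • (A * X * Xᵀ * A) + S * S) ∧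
      (ρ⁻¹ • (A * X * Xᵀ * A) + S * S)⁻¹ = ρ • (X * Xᵀ) + A⁻¹ * Pi * A⁻¹ ∧
      (ρ⁻¹ • (A * X * Xᵀ * A) + S * S) * (ρ • (X * Xᵀ) + A⁻¹ * Pi * A⁻¹) = 1 := by
  subst hS hPi
  have hXX : IsUnit (Xᵀ * X).det :=
    isUnit_det_transpose_mul_self_of_mul_eq_one (L := J * Xᵀ * A) <| by
      rw [Matrix.mul_assoc, Matrix.mul_assoc, ← Matrix.mul_assoc Xᵀ, hX, hJ2]
  have hG := G1_mul_eq_one ((isUnit_iff_isUnit_det A).mp hAinv) hX hJ2 hXX hρ.ne'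
  exact ⟨(isUnit_iff_isUnit_det _).mpr (isUnit_det_of_right_inverse hG), inv_eq_right_inv hG, hG⟩

/-- For `X` on the indefinite Stiefel manifold, `G¹_X = ρ⁻¹·AXXᵀA + S_X²` is
invertible with inverse `ρ·XXᵀ + A⁻¹Pi_XA⁻¹`. -/
theorem G1_inverse
    (n p : ℕ) (hpn : p ≤ n)
    (A : Matrix (Fin n) (Fin n) ℝ) (hA : Aᵀ = A) (hAinv : IsUnit A)
    (J : Matrix (Fin p) (Fin p) ℝ) (hJ : Jᵀ = J) (hJ2 : J * J = 1)
    (ρ : ℝ) (hρ : 0 < ρ)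
    (X : Matrix (Fin n) (Fin p) ℝ) (hX : Xᵀ * A * X = J)
    (S : Matrix (Fin n) (Fin n) ℝ) (hS : S = A - A * X * J * Xᵀ * A)
    (Pi : Matrix (Fin n) (Fin n) ℝ) (hPi : Pi = 1 - X * (Xᵀ * X)⁻¹ * Xᵀ) :
    IsUnit (ρ⁻¹ • (A * X * Xᵀ * A) + S * S) ∧
      (ρ⁻¹ • (A * X * Xᵀ * A) + S * S)⁻¹ = ρ • (X * Xᵀ) + A⁻¹ * Pi * A⁻¹ ∧
      (ρ⁻¹ • (A * X * Xᵀ * A) + S * S) * (ρ • (X * Xᵀ) + A⁻¹ * Pi * A⁻¹) = 1 :=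
  G1_inverse_general n p A hAinv J hJ2 ρ hρ X hX S hS Pi hPi
end

section
/- Let A be an n×n invertible symmetric real matrix, J a p×p symmetric real matrix with J·J = I_p, and ρ > 0. For any n×p real matrix X with XᵀAX = J, set Q_X := I_n − X J Xᵀ A and Π_X := I_n − X (XᵀX)⁻¹ Xᵀ. Then the matrix G²_X := ρ⁻¹·A X Xᵀ A + Π_X is invertible with inverse (G²_X)⁻¹ = ρ·X Xᵀ + Q_X·Q_Xᵀ; that is, (ρ⁻¹·A X Xᵀ A + Π_X)·(ρ·X Xᵀ + Q_X·Q_Xᵀ) = I_n. -/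
open Matrix

/-!
With `P := X (XᵀX)⁻¹ Xᵀ`, `Π = 1 - P` and `Q = 1 - X J Xᵀ A`, the relations `XᵀAX = J` and
`J² = 1` give `Q X = 0` and `Xᵀ A Q = 0`, while `Π X = 0`. Expanding the product, the two cross
terms vanish, `ρ⁻¹ A X Xᵀ A · ρ X Xᵀ = A X J Xᵀ`, and `Π Q Qᵀ = Π Qᵀ = Qᵀ = 1 - A X J Xᵀ`;
the sum is `1`. The order on `ℝ` enters only through the invertibility of `XᵀX`: `X` is injective
because `XᵀAX = J` is invertible, and a Gram matrix of an injective map over an ordered field is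
invertible.
-/

namespace Matrix

variable {m k K : Type*} [Fintype m] [Fintype k]

theorem mulVec_injective_of_isUnit_mul [DecidableEq k] [Field K] {B : Matrix k m K}
    {X : Matrix m k K} (h : IsUnit (B * X)) : Function.Injective X.mulVec := by
  refine Function.Injective.of_comp (f := B.mulVec) ?_
  simpa only [Function.comp_def, mulVec_mulVec] using mulVec_injective_iff_isUnit.2 h

theorem isUnit_transpose_mul_self_of_injective [DecidableEq k] [Field K] [LinearOrder K]
    [IsStrictOrderedRing K] {X : Matrix m k K} (hX : Function.Injective X.mulVec) :
    IsUnit (Xᵀ * X) := by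
  rw [← mulVec_injective_iff_isUnit, ← coe_mulVecLin, ← LinearMap.ker_eq_bot,
    ker_mulVecLin_transpose_mul_self, LinearMap.ker_eq_bot, coe_mulVecLin]
  exact hX

section CommRing

variable [DecidableEq m] [DecidableEq k] [CommRing K]
  {A : Matrix m m K} {J : Matrix k k K} {X : Matrix m k K}

theorem one_sub_mul_mul_transpose_mul_mul_self (hX : Xᵀ * A * X = J)
    (hJ2 : J * J = 1) : (1 - X * J * Xᵀ * A) * X = 0 := by
  simp only [Matrix.sub_mul, Matrix.one_mul, Matrix.mul_assoc]
  rw [← Matrix.mul_assoc Xᵀ, hX, hJ2, Matrix.mul_one, sub_self]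

theorem transpose_mul_mul_one_sub_mul_mul_transpose_mul (hX : Xᵀ * A * X = J)
    (hJ2 : J * J = 1) : Xᵀ * A * (1 - X * J * Xᵀ * A) = 0 := by
  rw [Matrix.mul_sub, Matrix.mul_one, ← Matrix.mul_assoc, ← Matrix.mul_assoc, ← Matrix.mul_assoc,
    hX, hJ2, Matrix.one_mul, sub_self]

theorem one_sub_mul_inv_transpose_mul_self_mul_self (hX : IsUnit (Xᵀ * X)) :
    (1 - X * (Xᵀ * X)⁻¹ * Xᵀ) * X = 0 := by
  rw [Matrix.sub_mul, Matrix.mul_assoc, Matrix.mul_assoc,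
    nonsing_inv_mul _ ((isUnit_iff_isUnit_det _).1 hX), Matrix.mul_one, Matrix.one_mul, sub_self]

theorem one_sub_mul_inv_transpose_mul_self_mul_transpose {M : Matrix m m K}
    (hM : M * X = 0) : (1 - X * (Xᵀ * X)⁻¹ * Xᵀ) * Mᵀ = Mᵀ := by
  rw [Matrix.sub_mul, Matrix.one_mul, Matrix.mul_assoc, ← transpose_mul, hM, transpose_zero,
    Matrix.mul_zero, sub_zero]

end CommRing

theorem smul_mul_mul_transpose_mul_add_one_sub_mul_smul_add_mul_transpose [DecidableEq m]
    [DecidableEq k] [Field K] {A : Matrix m m K} {J : Matrix k k K} {X : Matrix m k K}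
    (hA : Aᵀ = A) (hJ : Jᵀ = J) (hJ2 : J * J = 1) (hX : Xᵀ * A * X = J)
    (hG : IsUnit (Xᵀ * X)) {ρ : K} (hρ : ρ ≠ 0) :
    (ρ⁻¹ • (A * X * Xᵀ * A) + (1 - X * (Xᵀ * X)⁻¹ * Xᵀ)) *
      (ρ • (X * Xᵀ) + (1 - X * J * Xᵀ * A) * (1 - X * J * Xᵀ * A)ᵀ) = 1 := by
  set Pi := 1 - X * (Xᵀ * X)⁻¹ * Xᵀ
  set Q := 1 - X * J * Xᵀ * A
  have hPiX : Pi * X = 0 := one_sub_mul_inv_transpose_mul_self_mul_self hG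
  have hQt : Qᵀ = 1 - A * X * J * Xᵀ := by
    simp only [Q, transpose_sub, transpose_one, transpose_mul, transpose_transpose, hA, hJ,
      Matrix.mul_assoc]
  have h_range : A * X * Xᵀ * A * (X * Xᵀ) = A * X * J * Xᵀ := by
    rw [← hX]
    simp only [Matrix.mul_assoc]
  have h_cross₁ : A * X * Xᵀ * A * (Q * Qᵀ) = 0 := by
    rw [show A * X * Xᵀ * A * (Q * Qᵀ) = A * X * (Xᵀ * A * Q) * Qᵀ by simp only [Matrix.mul_assoc],
      transpose_mul_mul_one_sub_mul_mul_transpose_mul hX hJ2, Matrix.mul_zero, Matrix.zero_mul]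
  have h_cross₂ : Pi * (X * Xᵀ) = 0 := by
    rw [← Matrix.mul_assoc, hPiX, Matrix.zero_mul]
  have h_complement : Pi * (Q * Qᵀ) = Qᵀ := by
    have hPiQ : Pi * Q = Pi := by
      simp only [Q, Matrix.mul_sub, Matrix.mul_one, ← Matrix.mul_assoc, hPiX, Matrix.zero_mul,
        sub_zero]
    rw [← Matrix.mul_assoc, hPiQ,
      one_sub_mul_inv_transpose_mul_self_mul_transpose (one_sub_mul_mul_transpose_mul_mul_self hX hJ2)]
  rw [Matrix.add_mul, Matrix.mul_add, Matrix.mul_add, smul_mul_smul_comm, Matrix.smul_mul,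
    Matrix.mul_smul, h_range, h_cross₁, h_cross₂, h_complement, hQt, inv_mul_cancel₀ hρ, one_smul,
    smul_zero, smul_zero, add_zero, zero_add, add_sub_cancel]

end Matrix

theorem G2_inverse_general
    (n p : ℕ)
    (A : Matrix (Fin n) (Fin n) ℝ) (hA : Aᵀ = A)
    (J : Matrix (Fin p) (Fin p) ℝ) (hJ : Jᵀ = J) (hJ2 : J * J = 1)
    (ρ : ℝ) (hρ : 0 < ρ)
    (X : Matrix (Fin n) (Fin p) ℝ) (hX : Xᵀ * A * X = J)
    (Q : Matrix (Fin n) (Fin n) ℝ) (hQ : Q = 1 - X * J * Xᵀ * A)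
    (Pi : Matrix (Fin n) (Fin n) ℝ) (hPi : Pi = 1 - X * (Xᵀ * X)⁻¹ * Xᵀ) :
    IsUnit (ρ⁻¹ • (A * X * Xᵀ * A) + Pi) ∧
      (ρ⁻¹ • (A * X * Xᵀ * A) + Pi)⁻¹ = ρ • (X * Xᵀ) + Q * Qᵀ ∧
      (ρ⁻¹ • (A * X * Xᵀ * A) + Pi) * (ρ • (X * Xᵀ) + Q * Qᵀ) = 1 := by
  subst hQ hPi
  have hJu : IsUnit (Xᵀ * A * X) := hX ▸ IsUnit.of_mul_eq_one J hJ2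
  have hG : IsUnit (Xᵀ * X) :=
    isUnit_transpose_mul_self_of_injective (mulVec_injective_of_isUnit_mul hJu)
  have hmul := smul_mul_mul_transpose_mul_add_one_sub_mul_smul_add_mul_transpose
    hA hJ hJ2 hX hG hρ.ne'
  exact ⟨IsUnit.of_mul_eq_one _ hmul, inv_eq_right_inv hmul, hmul⟩

/-- For `X` on the indefinite Stiefel manifold, `G²_X = ρ⁻¹·AXXᵀA + Pi_X` is
invertible with inverse `ρ·XXᵀ + Q_X·Q_Xᵀ`. -/
theorem G2_inverse
    (n p : ℕ) (hpn : p ≤ n)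
    (A : Matrix (Fin n) (Fin n) ℝ) (hA : Aᵀ = A) (hAinv : IsUnit A)
    (J : Matrix (Fin p) (Fin p) ℝ) (hJ : Jᵀ = J) (hJ2 : J * J = 1)
    (ρ : ℝ) (hρ : 0 < ρ)
    (X : Matrix (Fin n) (Fin p) ℝ) (hX : Xᵀ * A * X = J)
    (Q : Matrix (Fin n) (Fin n) ℝ) (hQ : Q = 1 - X * J * Xᵀ * A)
    (Pi : Matrix (Fin n) (Fin n) ℝ) (hPi : Pi = 1 - X * (Xᵀ * X)⁻¹ * Xᵀ) :
    IsUnit (ρ⁻¹ • (A * X * Xᵀ * A) + Pi) ∧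
      (ρ⁻¹ • (A * X * Xᵀ * A) + Pi)⁻¹ = ρ • (X * Xᵀ) + Q * Qᵀ ∧
      (ρ⁻¹ • (A * X * Xᵀ * A) + Pi) * (ρ • (X * Xᵀ) + Q * Qᵀ) = 1 :=
  G2_inverse_general n p A hA J hJ hJ2 ρ hρ X hX Q hQ Pi hPi
end

section
/- Let A be an n×n invertible symmetric real matrix, J a p×p symmetric real matrix with J·J = I_p, and ρ > 0. For any n×p real matrix X with XᵀAX = J, set Π_X := I_n − X (XᵀX)⁻¹ Xᵀ. Then for every n×p real matrix K, XᵀA·(ρ·X Xᵀ + A⁻¹ Π_X A⁻¹)·K = ρ·J·Xᵀ·K. -/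
open Matrix

/-- `XᵀA·(G¹_X)⁻¹·K = ρ·J·Xᵀ·K` for every `K`. -/
theorem G1_inv_key_identity
    (n p : ℕ) (hpn : p ≤ n)
    (A : Matrix (Fin n) (Fin n) ℝ) (hA : Aᵀ = A) (hAinv : IsUnit A)
    (J : Matrix (Fin p) (Fin p) ℝ) (hJ : Jᵀ = J) (hJ2 : J * J = 1)
    (ρ : ℝ) (hρ : 0 < ρ)
    (X : Matrix (Fin n) (Fin p) ℝ) (hX : Xᵀ * A * X = J)
    (Pi : Matrix (Fin n) (Fin n) ℝ) (hPi : Pi = 1 - X * (Xᵀ * X)⁻¹ * Xᵀ) :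
    ∀ K : Matrix (Fin n) (Fin p) ℝ,
      Xᵀ * A * (ρ • (X * Xᵀ) + A⁻¹ * Pi * A⁻¹) * K = ρ • (J * Xᵀ * K) := by
  -- X has trivial kernel since XᵀAX = J is invertible
  have hXinj : ∀ v : Fin p → ℝ, X *ᵥ v = 0 → v = 0 := by
    intro v hv
    have h1 : J *ᵥ v = 0 := by
      rw [← hX, ← Matrix.mulVec_mulVec, ← Matrix.mulVec_mulVec, hv,
        Matrix.mulVec_zero, Matrix.mulVec_zero]
    have h2 : J *ᵥ (J *ᵥ v) = v := by
      rw [Matrix.mulVec_mulVec, hJ2, Matrix.one_mulVec]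
    rw [h1, Matrix.mulVec_zero] at h2
    exact h2.symm
  -- XᵀX is a unit
  have hU : IsUnit (Xᵀ * X) := by
    rw [← Matrix.mulVec_injective_iff_isUnit]
    intro v w hvw
    have h0 : (Xᵀ * X) *ᵥ (v - w) = 0 := by
      rw [Matrix.mulVec_sub, hvw, sub_self]
    have hdot : (X *ᵥ (v - w)) ⬝ᵥ (X *ᵥ (v - w)) = 0 := by
      have h := congrArg (fun u => (v - w) ⬝ᵥ u) h0
      simpa [← Matrix.mulVec_mulVec, Matrix.dotProduct_mulVec,
        Matrix.vecMul_transpose] using h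
    have hXvw : X *ᵥ (v - w) = 0 := by
      ext i
      have h := (Finset.sum_eq_zero_iff_of_nonneg
        (fun j _ => mul_self_nonneg ((X *ᵥ (v - w)) j))).mp hdot i (Finset.mem_univ i)
      simpa using mul_self_eq_zero.mp h
    exact sub_eq_zero.mp (hXinj _ hXvw)
  have hXX : (Xᵀ * X) * (Xᵀ * X)⁻¹ = 1 :=
    Matrix.mul_nonsing_inv _ ((Matrix.isUnit_iff_isUnit_det _).mp hU)
  have hXPi : Xᵀ * Pi = 0 := by
    rw [hPi, Matrix.mul_sub, Matrix.mul_one]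
    have : Xᵀ * (X * (Xᵀ * X)⁻¹ * Xᵀ) = Xᵀ := by
      rw [← Matrix.mul_assoc, ← Matrix.mul_assoc, hXX, Matrix.one_mul]
    rw [this, sub_self]
  have hAA : A * A⁻¹ = 1 :=
    Matrix.mul_nonsing_inv _ ((Matrix.isUnit_iff_isUnit_det _).mp hAinv)
  intro K
  have key : Xᵀ * A * (ρ • (X * Xᵀ) + A⁻¹ * Pi * A⁻¹) = ρ • (J * Xᵀ) := by
    rw [Matrix.mul_add]
    have h1 : Xᵀ * A * (ρ • (X * Xᵀ)) = ρ • (J * Xᵀ) := by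
      rw [Matrix.mul_smul, ← Matrix.mul_assoc, hX]
    have h2 : Xᵀ * A * (A⁻¹ * Pi * A⁻¹) = 0 := by
      calc Xᵀ * A * (A⁻¹ * Pi * A⁻¹) = Xᵀ * (A * A⁻¹) * Pi * A⁻¹ := by
            simp only [Matrix.mul_assoc]
        _ = Xᵀ * Pi * A⁻¹ := by rw [hAA, Matrix.mul_one]
        _ = 0 := by rw [hXPi, Matrix.zero_mul]
    rw [h1, h2, add_zero]
  rw [key, Matrix.smul_mul, Matrix.mul_assoc]
end

section
/- Let A be an n×n symmetric real matrix and X an n×p real matrix. Suppose ξ and η are n×p real matrices tangent at X, i.e., ξᵀAX + XᵀAξ = 0 and ηᵀAX + XᵀAη = 0. Define B'_{X,ξ,η} := sym(Xξᵀ)·A·η + sym(Xηᵀ)·A·ξ − sym(ξηᵀ)·A·X and B_{X,ξ,η} := ξ·XᵀAη + η·XᵀAξ. Then B'_{X,ξ,η} = X·sym(ξᵀAη) + B_{X,ξ,η}. -/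
open Matrix

/-- The symmetric part of a square matrix. -/
noncomputable def msym {m : Type*} (S : Matrix m m ℝ) : Matrix m m ℝ :=
  (1 / 2 : ℝ) • (S + Sᵀ)

/-- `B'_{X,ξ,η} = X·sym(ξᵀAη) + B_{X,ξ,η}` for tangent `ξ, η`. -/
theorem Bprime_eq
    (n p : ℕ) (hpn : p ≤ n)
    (A : Matrix (Fin n) (Fin n) ℝ) (hA : Aᵀ = A)
    (X ξ η : Matrix (Fin n) (Fin p) ℝ)
    (hξ : ξᵀ * A * X + Xᵀ * A * ξ = 0)
    (hη : ηᵀ * A * X + Xᵀ * A * η = 0) :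
    msym (X * ξᵀ) * A * η + msym (X * ηᵀ) * A * ξ - msym (ξ * ηᵀ) * A * X
      = X * msym (ξᵀ * A * η) + (ξ * (Xᵀ * A * η) + η * (Xᵀ * A * ξ)) := by
  have h1 : ξᵀ * A * X = -(Xᵀ * A * ξ) := eq_neg_of_add_eq_zero_left hξ
  have h2 : ηᵀ * A * X = -(Xᵀ * A * η) := eq_neg_of_add_eq_zero_left hη
  simp only [msym, Matrix.transpose_mul, Matrix.transpose_transpose, Matrix.smul_mul,
    Matrix.add_mul, Matrix.mul_add, Matrix.mul_smul, hA]
  have h1' : ξᵀ * (A * X) = -(Xᵀ * (A * ξ)) := by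
    simpa only [Matrix.mul_assoc] using h1
  have h2' : ηᵀ * (A * X) = -(Xᵀ * (A * η)) := by
    simpa only [Matrix.mul_assoc] using h2
  simp only [Matrix.mul_assoc, h1', h2', Matrix.mul_neg]
  module
end

section
/- Let A be an n×n invertible symmetric real matrix and J a p×p symmetric real matrix with J·J = I_p. Let X be an n×p real matrix with XᵀAX = J, and let ξ, η be n×p real matrices tangent at X (ξᵀAX + XᵀAξ = 0 and ηᵀAX + XᵀAη = 0). Define Π_X := I_n − X(XᵀX)⁻¹Xᵀ, S_X := A − A X J Xᵀ A, B'_{X,ξ,η} := sym(Xξᵀ)·A·η + sym(Xηᵀ)·A·ξ − sym(ξηᵀ)·A·X, and B_{X,ξ,η} := ξ·XᵀAη + η·XᵀAξ. Then Π_X·B'_{X,ξ,η} = Π_X·B_{X,ξ,η} and S_X·S_X·B'_{X,ξ,η} = S_X·S_X·B_{X,ξ,η}. -/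
open Matrix

/-- `Pi_X B' = Pi_X B` and `S_X² B' = S_X² B` for tangent `ξ, η`. -/
theorem Pi_S_Bprime_eq
    (n p : ℕ) (hpn : p ≤ n)
    (A : Matrix (Fin n) (Fin n) ℝ) (hA : Aᵀ = A) (hAinv : IsUnit A)
    (J : Matrix (Fin p) (Fin p) ℝ) (hJ : Jᵀ = J) (hJ2 : J * J = 1)
    (X : Matrix (Fin n) (Fin p) ℝ) (hX : Xᵀ * A * X = J)
    (ξ η : Matrix (Fin n) (Fin p) ℝ)
    (hξ : ξᵀ * A * X + Xᵀ * A * ξ = 0)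
    (hη : ηᵀ * A * X + Xᵀ * A * η = 0)
    (Pi : Matrix (Fin n) (Fin n) ℝ) (hPi : Pi = 1 - X * (Xᵀ * X)⁻¹ * Xᵀ)
    (S : Matrix (Fin n) (Fin n) ℝ) (hS : S = A - A * X * J * Xᵀ * A)
    (B' : Matrix (Fin n) (Fin p) ℝ)
    (hB' : B' = msym (X * ξᵀ) * A * η + msym (X * ηᵀ) * A * ξ - msym (ξ * ηᵀ) * A * X)
    (B : Matrix (Fin n) (Fin p) ℝ)
    (hB : B = ξ * (Xᵀ * A * η) + η * (Xᵀ * A * ξ)) :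
    Pi * B' = Pi * B ∧ S * S * B' = S * S * B := by
  have h1 : ξᵀ * (A * X) = -(Xᵀ * (A * ξ)) := by
    have h := hξ; rw [Matrix.mul_assoc, Matrix.mul_assoc] at h
    exact eq_neg_of_add_eq_zero_left h
  have h2 : ηᵀ * (A * X) = -(Xᵀ * (A * η)) := by
    have h := hη; rw [Matrix.mul_assoc, Matrix.mul_assoc] at h
    exact eq_neg_of_add_eq_zero_left h
  -- key decomposition : B' = B + X * C
  have key : B' = B + X * ((1 / 2 : ℝ) • (ξᵀ * (A * η) + ηᵀ * (A * ξ))) := by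
    subst hB' hB
    simp only [msym, transpose_mul, transpose_transpose, Matrix.smul_mul, Matrix.add_mul,
      Matrix.mul_assoc, h1, h2, Matrix.mul_neg, Matrix.mul_add, smul_add, Matrix.mul_smul]
    module
  -- invertibility of XᵀX
  have hJX : Xᵀ * (A * X) = J := by rw [← Matrix.mul_assoc]; exact hX
  have hdet : IsUnit (Xᵀ * X).det := by
    rw [isUnit_iff_ne_zero]
    intro h0
    obtain ⟨v, hv, hv0⟩ := (Matrix.exists_mulVec_eq_zero_iff).mpr h0
    have hXv : X.mulVec v = 0 := by
      have hmem : v ∈ LinearMap.ker (Xᵀ * X).mulVecLin := by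
        rw [LinearMap.mem_ker, Matrix.mulVecLin_apply]; exact hv0
      have := (Matrix.ker_mulVecLin_transpose_mul_self X).le hmem
      rwa [LinearMap.mem_ker, Matrix.mulVecLin_apply] at this
    have hJv : J.mulVec v = 0 := by
      rw [← hJX, ← Matrix.mulVec_mulVec, ← Matrix.mulVec_mulVec, hXv,
        Matrix.mulVec_zero, Matrix.mulVec_zero]
    have : v = 0 := by
      have := congrArg (J.mulVec) hJv
      rwa [Matrix.mulVec_mulVec, hJ2, Matrix.one_mulVec, Matrix.mulVec_zero] at this
    exact hv this
  have hPiX : Pi * X = 0 := by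
    rw [hPi, Matrix.sub_mul, Matrix.one_mul, Matrix.mul_assoc, Matrix.mul_assoc,
      Matrix.nonsing_inv_mul _ hdet,
      Matrix.mul_one, sub_self]
  have hSX : S * X = 0 := by
    rw [hS, Matrix.sub_mul, Matrix.mul_assoc (A * X * J), Matrix.mul_assoc,
      hX, Matrix.mul_assoc (A * X), hJ2, Matrix.mul_one, sub_self]
  constructor
  · rw [key, Matrix.mul_add, ← Matrix.mul_assoc, hPiX, Matrix.zero_mul, add_zero]
  · have hSSX : S * S * X = 0 := by rw [Matrix.mul_assoc, hSX, Matrix.mul_zero]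
    rw [key, Matrix.mul_add, ← Matrix.mul_assoc (S * S) X, hSSX, Matrix.zero_mul, add_zero]
end

section
/- Let A be an n×n invertible symmetric real matrix and J a p×p symmetric real matrix with J·J = I_p. Let X be an n×p real matrix with XᵀAX = J, and let ξ, η be n×p real matrices tangent at X (ξᵀAX + XᵀAξ = 0 and ηᵀAX + XᵀAη = 0). Define B'_{X,ξ,η} := sym(Xξᵀ)·A·η + sym(Xηᵀ)·A·ξ − sym(ξηᵀ)·A·X. Then XᵀA·B'_{X,ξ,η} = J·sym(ξᵀAη) + 2·sym((XᵀAξ)·(XᵀAη)). -/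
open Matrix

/-- `XᵀA·B' = J·sym(ξᵀAη) + 2·sym(XᵀAξ·XᵀAη)` for tangent `ξ, η`. -/
theorem XtA_Bprime_eq
    (n p : ℕ) (hpn : p ≤ n)
    (A : Matrix (Fin n) (Fin n) ℝ) (hA : Aᵀ = A) (hAinv : IsUnit A)
    (J : Matrix (Fin p) (Fin p) ℝ) (hJ : Jᵀ = J) (hJ2 : J * J = 1)
    (X : Matrix (Fin n) (Fin p) ℝ) (hX : Xᵀ * A * X = J)
    (ξ η : Matrix (Fin n) (Fin p) ℝ)
    (hξ : ξᵀ * A * X + Xᵀ * A * ξ = 0)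
    (hη : ηᵀ * A * X + Xᵀ * A * η = 0)
    (B' : Matrix (Fin n) (Fin p) ℝ)
    (hB' : B' = msym (X * ξᵀ) * A * η + msym (X * ηᵀ) * A * ξ - msym (ξ * ηᵀ) * A * X) :
    Xᵀ * A * B' = J * msym (ξᵀ * A * η) + (2 : ℝ) • msym ((Xᵀ * A * ξ) * (Xᵀ * A * η)) := by
  have hS : ξᵀ * A * X = -(Xᵀ * A * ξ) := eq_neg_of_add_eq_zero_left hξ
  have hT : ηᵀ * A * X = -(Xᵀ * A * η) := eq_neg_of_add_eq_zero_left hη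
  subst hB'
  simp only [msym, Matrix.smul_mul, Matrix.mul_smul, Matrix.mul_add, Matrix.add_mul,
    Matrix.mul_sub, Matrix.sub_mul, transpose_mul, transpose_transpose, transpose_smul,
    transpose_add, hA, Matrix.mul_assoc]
  have k1 : ∀ r : Matrix (Fin p) (Fin p) ℝ, Xᵀ * (A * (X * r)) = J * r := fun r => by
    rw [← Matrix.mul_assoc, ← Matrix.mul_assoc, hX]
  have k2 : ∀ r : Matrix (Fin p) (Fin p) ℝ, Xᵀ * (A * (ξ * r)) = Xᵀ * A * ξ * r := fun r => by
    rw [Matrix.mul_assoc, Matrix.mul_assoc]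
  have k3 : ∀ r : Matrix (Fin p) (Fin p) ℝ, Xᵀ * (A * (η * r)) = Xᵀ * A * η * r := fun r => by
    rw [Matrix.mul_assoc, Matrix.mul_assoc]
  have k4 : ∀ r : Matrix (Fin p) (Fin p) ℝ, ηᵀ * (A * (X * r)) = -(Xᵀ * A * η * r) := fun r => by
    rw [← Matrix.mul_assoc, ← Matrix.mul_assoc, hT, Matrix.neg_mul]
  have k5 : ξᵀ * (A * X) = -(Xᵀ * A * ξ) := by rw [← Matrix.mul_assoc, hS]
  have k6 : ηᵀ * (A * X) = -(Xᵀ * A * η) := by rw [← Matrix.mul_assoc, hT]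
  have k7 : Xᵀ * (A * η) = Xᵀ * A * η := (Matrix.mul_assoc _ _ _).symm
  have k8 : Xᵀ * (A * ξ) = Xᵀ * A * ξ := (Matrix.mul_assoc _ _ _).symm
  simp only [k1, k2, k3, k4, k5, k6, k7, k8, Matrix.mul_neg, Matrix.neg_mul, neg_neg]
  module
end

section
/- Let X be an n×p real matrix with XᵀX invertible, and set M_X := (XᵀX)⁻¹ and Π_X := I_n − X M_X Xᵀ. For arbitrary n×p real matrices ξ, η, define D_{X,ξ,η} := sym(X M_X ξᵀ)·η + sym(X M_X ηᵀ)·ξ − sym(ξηᵀ)·X·M_X and E_{X,ξ,η} := sym(ξᵀX)·M_X·Xᵀη + sym(ηᵀX)·M_X·Xᵀξ − Xᵀ·sym(ξηᵀ)·X·M_X. Then −Xᵀ·D_{X,ξ,η} + E_{X,ξ,η} = −sym(ξᵀ·Π_X·η). -/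
open Matrix

/-- `−XᵀD + E = −sym(ξᵀ·Pi_X·η)`. -/
theorem neg_XtD_add_E_eq
    (n p : ℕ) (hpn : p ≤ n)
    (X : Matrix (Fin n) (Fin p) ℝ) (hXgram : IsUnit (Xᵀ * X))
    (M : Matrix (Fin p) (Fin p) ℝ) (hM : M = (Xᵀ * X)⁻¹)
    (Pi : Matrix (Fin n) (Fin n) ℝ) (hPi : Pi = 1 - X * M * Xᵀ)
    (ξ η : Matrix (Fin n) (Fin p) ℝ)
    (D : Matrix (Fin n) (Fin p) ℝ)
    (hD : D = msym (X * M * ξᵀ) * η + msym (X * M * ηᵀ) * ξ - msym (ξ * ηᵀ) * X * M)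
    (E : Matrix (Fin p) (Fin p) ℝ)
    (hE : E = msym (ξᵀ * X) * M * (Xᵀ * η) + msym (ηᵀ * X) * M * (Xᵀ * ξ)
      - Xᵀ * msym (ξ * ηᵀ) * X * M) :
    -(Xᵀ * D) + E = -msym (ξᵀ * Pi * η) := by
  have hdet := (Matrix.isUnit_iff_isUnit_det _).mp hXgram
  have hMT : ((Xᵀ*X)⁻¹)ᵀ = (Xᵀ*X)⁻¹ := by
    rw [Matrix.transpose_nonsing_inv, Matrix.transpose_mul, Matrix.transpose_transpose]
  have h1 : ∀ (Y : Matrix (Fin p) (Fin p) ℝ), (Xᵀ*X)⁻¹ * (Xᵀ * (X * Y)) = Y := by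
    intro Y
    simp [← Matrix.mul_assoc, Matrix.nonsing_inv_mul _ hdet]
  have h2 : ∀ (Y : Matrix (Fin p) (Fin p) ℝ), Xᵀ * (X * ((Xᵀ*X)⁻¹ * Y)) = Y := by
    intro Y
    simp [← Matrix.mul_assoc, Matrix.mul_nonsing_inv _ hdet]
  subst hM hPi hD hE
  simp only [msym, Matrix.transpose_smul, Matrix.transpose_add, Matrix.transpose_sub,
    Matrix.transpose_one, Matrix.transpose_mul,
    Matrix.transpose_transpose, hMT, Matrix.smul_mul, Matrix.mul_smul,
    Matrix.mul_add, Matrix.add_mul, Matrix.mul_sub, Matrix.sub_mul,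
    Matrix.mul_one, Matrix.one_mul, Matrix.mul_assoc, h1, h2]
  module
end

section
/- Let A be an n×n invertible symmetric real matrix and J a p×p symmetric real matrix with J·J = I_p. Let X be an n×p real matrix with XᵀAX = J, and set M_X := (XᵀX)⁻¹ and S_X := A − A X J Xᵀ A. For arbitrary n×p real matrices ξ, η, define D_{X,ξ,η} := sym(X M_X ξᵀ)·η + sym(X M_X ηᵀ)·ξ − sym(ξηᵀ)·X·M_X and E_{X,ξ,η} := sym(ξᵀX)·M_X·Xᵀη + sym(ηᵀX)·M_X·Xᵀξ − Xᵀ·sym(ξηᵀ)·X·M_X. Then A⁻¹·S_X·(−D_{X,ξ,η} + X·M_X·E_{X,ξ,η}) = −A⁻¹·S_X·(ξ·skew(M_X Xᵀ η) + η·skew(M_X Xᵀ ξ)). -/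
open Matrix

/-- The skew-symmetric part of a square matrix. -/
noncomputable def mskew {m : Type*} (S : Matrix m m ℝ) : Matrix m m ℝ :=
  (1 / 2 : ℝ) • (S - Sᵀ)

/-- `A⁻¹S_X(−D + XM_XE) = −A⁻¹S_X(ξ·skew(M_XXᵀη) + η·skew(M_XXᵀξ))`. -/
theorem AinvS_D_E_eq
    (n p : ℕ) (hpn : p ≤ n)
    (A : Matrix (Fin n) (Fin n) ℝ) (hA : Aᵀ = A) (hAinv : IsUnit A)
    (J : Matrix (Fin p) (Fin p) ℝ) (hJ : Jᵀ = J) (hJ2 : J * J = 1)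
    (X : Matrix (Fin n) (Fin p) ℝ) (hX : Xᵀ * A * X = J)
    (M : Matrix (Fin p) (Fin p) ℝ) (hM : M = (Xᵀ * X)⁻¹)
    (S : Matrix (Fin n) (Fin n) ℝ) (hS : S = A - A * X * J * Xᵀ * A)
    (ξ η : Matrix (Fin n) (Fin p) ℝ)
    (D : Matrix (Fin n) (Fin p) ℝ)
    (hD : D = msym (X * M * ξᵀ) * η + msym (X * M * ηᵀ) * ξ - msym (ξ * ηᵀ) * X * M)
    (E : Matrix (Fin p) (Fin p) ℝ)
    (hE : E = msym (ξᵀ * X) * M * (Xᵀ * η) + msym (ηᵀ * X) * M * (Xᵀ * ξ)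
      - Xᵀ * msym (ξ * ηᵀ) * X * M) :
    A⁻¹ * S * (-D + X * M * E)
      = -(A⁻¹ * S * (ξ * mskew (M * Xᵀ * η) + η * mskew (M * Xᵀ * ξ))) := by
  have h1 : Xᵀ * (A * X) = J := by rw [← Matrix.mul_assoc]; exact hX
  have hSX : S * X = 0 := by
    simp [hS, Matrix.sub_mul, Matrix.mul_assoc, h1, hJ2]
  have hMsym : Mᵀ = M := by
    rw [hM, Matrix.transpose_nonsing_inv, Matrix.transpose_mul, transpose_transpose]
  set W : Matrix (Fin p) (Fin p) ℝ :=
    M * ((-(1/2 : ℝ)) • (ξᵀ * η) + (-(1/2 : ℝ)) • (ηᵀ * ξ) + E) with hW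
  have key : -D + X * M * E
      = -(ξ * mskew (M * Xᵀ * η) + η * mskew (M * Xᵀ * ξ)) + X * W := by
    simp only [hW, hD, msym, mskew, transpose_mul, transpose_transpose, hMsym,
      Matrix.mul_smul, Matrix.smul_mul, Matrix.mul_add, Matrix.add_mul,
      Matrix.mul_sub, Matrix.sub_mul, Matrix.mul_assoc, smul_add, smul_sub,
      smul_smul, Matrix.neg_mul, Matrix.mul_neg, neg_add, neg_neg, neg_smul]
    module
  rw [key, Matrix.mul_add, Matrix.mul_assoc A⁻¹ S (X * W), ← Matrix.mul_assoc S X W,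
    hSX, Matrix.zero_mul, Matrix.mul_zero, add_zero, Matrix.mul_neg]
end

section
/- Let A be an n×n invertible symmetric real matrix and J a p×p symmetric real matrix with J·J = I_p. Let X be an n×p real matrix with XᵀAX = J, and define the projection P_X(Y) := Y − X·J·sym(XᵀAY) for n×p matrices Y, together with Π_X := I_n − X(XᵀX)⁻¹Xᵀ and S_X := A − A X J Xᵀ A. Then: (a) P_X(X·J·W) = 0 for every symmetric p×p matrix W; (b) P_X(A⁻¹·Π_X·K) = A⁻¹·Π_X·K for every n×p matrix K; (c) P_X(A⁻¹·S_X·K) = A⁻¹·S_X·K for every n×p matrix K. -/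
open Matrix

lemma msym_zero {m : Type*} : msym (0 : Matrix m m ℝ) = 0 := by
  simp [msym]

/-- Properties of the tangent projection `P_X(Y) = Y − XJ·sym(XᵀAY)`:
it kills `XJW` for symmetric `W` and fixes `A⁻¹Pi_XK` and `A⁻¹S_XK`. -/
theorem projection_properties
    (n p : ℕ) (hpn : p ≤ n)
    (A : Matrix (Fin n) (Fin n) ℝ) (hA : Aᵀ = A) (hAinv : IsUnit A)
    (J : Matrix (Fin p) (Fin p) ℝ) (hJ : Jᵀ = J) (hJ2 : J * J = 1)
    (X : Matrix (Fin n) (Fin p) ℝ) (hX : Xᵀ * A * X = J)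
    (P : Matrix (Fin n) (Fin p) ℝ → Matrix (Fin n) (Fin p) ℝ)
    (hP : ∀ Y, P Y = Y - X * J * msym (Xᵀ * A * Y))
    (Pi : Matrix (Fin n) (Fin n) ℝ) (hPi : Pi = 1 - X * (Xᵀ * X)⁻¹ * Xᵀ)
    (S : Matrix (Fin n) (Fin n) ℝ) (hS : S = A - A * X * J * Xᵀ * A) :
    (∀ W : Matrix (Fin p) (Fin p) ℝ, Wᵀ = W → P (X * J * W) = 0) ∧
    (∀ K : Matrix (Fin n) (Fin p) ℝ, P (A⁻¹ * Pi * K) = A⁻¹ * Pi * K) ∧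
    (∀ K : Matrix (Fin n) (Fin p) ℝ, P (A⁻¹ * S * K) = A⁻¹ * S * K) := by
  have hAAinv : A * A⁻¹ = 1 :=
    Matrix.mul_nonsing_inv A ((Matrix.isUnit_iff_isUnit_det A).mp hAinv)
  -- X has injective mulVec
  have hXinj : ∀ v : Fin p → ℝ, X.mulVec v = 0 → v = 0 := by
    intro v hv
    have h1 : J.mulVec v = 0 := by
      rw [← hX, ← Matrix.mulVec_mulVec, ← Matrix.mulVec_mulVec, hv]
      simp
    calc v = (J * J).mulVec v := by rw [hJ2]; simp
    _ = J.mulVec (J.mulVec v) := by rw [Matrix.mulVec_mulVec]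
    _ = 0 := by rw [h1]; simp
  have hXtX : IsUnit (Xᵀ * X) := by
    rw [← Matrix.mulVec_injective_iff_isUnit]
    intro v w hvw
    have h0 : ∀ u : Fin p → ℝ, (Xᵀ * X).mulVec u = 0 → u = 0 := by
      intro u hu
      apply hXinj
      have : (X.mulVec u) ⬝ᵥ (X.mulVec u) = 0 := by
        have := congrArg (fun z => u ⬝ᵥ z) hu
        simpa [← Matrix.mulVec_mulVec, Matrix.dotProduct_mulVec,
          Matrix.vecMul_transpose] using this
      exact dotProduct_self_eq_zero.mp this
    have : (Xᵀ * X).mulVec (v - w) = 0 := by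
      rw [Matrix.mulVec_sub, hvw, sub_self]
    exact sub_eq_zero.mp (h0 _ this)
  have hdet : IsUnit (Xᵀ * X).det := (Matrix.isUnit_iff_isUnit_det _).mp hXtX
  have hXtXinv : Xᵀ * X * (Xᵀ * X)⁻¹ = 1 := Matrix.mul_nonsing_inv _ hdet
  refine ⟨?_, ?_, ?_⟩
  · intro W hW
    have h1 : Xᵀ * A * (X * J * W) = W := by
      rw [← Matrix.mul_assoc, ← Matrix.mul_assoc, hX, hJ2, Matrix.one_mul]
    have h2 : msym W = W := by
      rw [msym, hW, ← two_smul ℝ W, smul_smul]; norm_num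
    rw [hP, h1, h2, sub_self]
  · intro K
    have h1 : Xᵀ * A * (A⁻¹ * Pi * K) = 0 := by
      have hXPi : Xᵀ * Pi = 0 := by
        rw [hPi, Matrix.mul_sub, Matrix.mul_one,
          show Xᵀ * (X * (Xᵀ * X)⁻¹ * Xᵀ) = Xᵀ * X * (Xᵀ * X)⁻¹ * Xᵀ by
            simp [Matrix.mul_assoc],
          hXtXinv, Matrix.one_mul, sub_self]
      calc Xᵀ * A * (A⁻¹ * Pi * K) = Xᵀ * (A * A⁻¹) * Pi * K := by
            simp [Matrix.mul_assoc]
        _ = 0 := by rw [hAAinv, Matrix.mul_one, hXPi, Matrix.zero_mul]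
    rw [hP, h1, msym_zero, Matrix.mul_zero, sub_zero]
  · intro K
    have hXS : Xᵀ * S = 0 := by
      rw [hS, Matrix.mul_sub,
        show Xᵀ * (A * X * J * Xᵀ * A) = (Xᵀ * A * X) * J * (Xᵀ * A) by
          simp [Matrix.mul_assoc],
        hX, hJ2, Matrix.one_mul, sub_self]
    have h1 : Xᵀ * A * (A⁻¹ * S * K) = 0 := by
      calc Xᵀ * A * (A⁻¹ * S * K) = Xᵀ * (A * A⁻¹) * S * K := by
            simp [Matrix.mul_assoc]
        _ = 0 := by rw [hAAinv, Matrix.mul_one, hXS, Matrix.zero_mul]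
    rw [hP, h1, msym_zero, Matrix.mul_zero, sub_zero]
end

section
/- Let A be an n×n invertible symmetric real matrix, J a p×p symmetric real matrix with J·J = I_p, and ρ > 0. Let X be an n×p real matrix with XᵀAX = J, and let ξ, η be n×p real matrices tangent at X (ξᵀAX + XᵀAξ = 0 and ηᵀAX + XᵀAη = 0). Define M_X := (XᵀX)⁻¹, Π_X := I_n − X M_X Xᵀ, S_X := A − A X J Xᵀ A, P_X(Y) := Y − X·J·sym(XᵀAY), B_{X,ξ,η} := ξ·XᵀAη + η·XᵀAξ, B'_{X,ξ,η} := sym(Xξᵀ)·A·η + sym(Xηᵀ)·A·ξ − sym(ξηᵀ)·A·X, D_{X,ξ,η} := sym(X M_X ξᵀ)·η + sym(X M_X ηᵀ)·ξ − sym(ξηᵀ)·X·M_X, and E_{X,ξ,η} := sym(ξᵀX)·M_X·Xᵀη + sym(ηᵀX)·M_X·Xᵀξ − Xᵀ·sym(ξηᵀ)·X·M_X. Let Ω_ξ := XᵀAξ and Ω_η := XᵀAη. Then P_X((ρ·XXᵀ + A⁻¹S_X²A⁻¹)·(ρ⁻¹·A·B'_{X,ξ,η} − D_{X,ξ,η}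 + X·M_X·E_{X,ξ,η})) = A⁻¹·S_X·(ρ⁻¹·S_X·B_{X,ξ,η} − D_{X,ξ,η} + A·X·J·sym(ξᵀΠ_Xη)) + P_X(X·(−ρ·sym(ξᵀΠ_Xη) + 2·sym(Ω_ξ·Ω_η))). -/
open Matrix

lemma cancel_aux {a b c : Type*} [Fintype b] [Fintype a] [DecidableEq a]
    (U : Matrix a b ℝ) (V : Matrix b a ℝ) (h : U * V = 1)
    (B : Matrix a c ℝ) : U * (V * B) = B := by
  rw [← Matrix.mul_assoc, h, Matrix.one_mul]

set_option maxHeartbeats 4000000 in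
/-- The projected Christoffel function for the metric `G²`. -/
theorem projected_Christoffel_G2
    (n p : ℕ) (hpn : p ≤ n)
    (A : Matrix (Fin n) (Fin n) ℝ) (hA : Aᵀ = A) (hAinv : IsUnit A)
    (J : Matrix (Fin p) (Fin p) ℝ) (hJ : Jᵀ = J) (hJ2 : J * J = 1)
    (ρ : ℝ) (hρ : 0 < ρ)
    (X : Matrix (Fin n) (Fin p) ℝ) (hX : Xᵀ * A * X = J)
    (ξ η : Matrix (Fin n) (Fin p) ℝ)
    (hξ : ξᵀ * A * X + Xᵀ * A * ξ = 0)
    (hη : ηᵀ * A * X + Xᵀ * A * η = 0)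
    (M : Matrix (Fin p) (Fin p) ℝ) (hM : M = (Xᵀ * X)⁻¹)
    (Pi : Matrix (Fin n) (Fin n) ℝ) (hPi : Pi = 1 - X * M * Xᵀ)
    (S : Matrix (Fin n) (Fin n) ℝ) (hS : S = A - A * X * J * Xᵀ * A)
    (P : Matrix (Fin n) (Fin p) ℝ → Matrix (Fin n) (Fin p) ℝ)
    (hP : ∀ Y, P Y = Y - X * J * msym (Xᵀ * A * Y))
    (B : Matrix (Fin n) (Fin p) ℝ)
    (hB : B = ξ * (Xᵀ * A * η) + η * (Xᵀ * A * ξ))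
    (B' : Matrix (Fin n) (Fin p) ℝ)
    (hB' : B' = msym (X * ξᵀ) * A * η + msym (X * ηᵀ) * A * ξ - msym (ξ * ηᵀ) * A * X)
    (D : Matrix (Fin n) (Fin p) ℝ)
    (hD : D = msym (X * M * ξᵀ) * η + msym (X * M * ηᵀ) * ξ - msym (ξ * ηᵀ) * X * M)
    (E : Matrix (Fin p) (Fin p) ℝ)
    (hE : E = msym (ξᵀ * X) * M * (Xᵀ * η) + msym (ηᵀ * X) * M * (Xᵀ * ξ)
      - Xᵀ * msym (ξ * ηᵀ) * X * M)
    (Ωξ Ωη : Matrix (Fin p) (Fin p) ℝ)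
    (hΩξ : Ωξ = Xᵀ * A * ξ) (hΩη : Ωη = Xᵀ * A * η) :
    P ((ρ • (X * Xᵀ) + A⁻¹ * (S * S) * A⁻¹) * (ρ⁻¹ • (A * B') - D + X * M * E))
      = A⁻¹ * S * (ρ⁻¹ • (S * B) - D + A * X * J * msym (ξᵀ * Pi * η))
        + P (X * (-(ρ • msym (ξᵀ * Pi * η)) + (2 : ℝ) • msym (Ωξ * Ωη))) := by
  have hdet : IsUnit A.det := (Matrix.isUnit_iff_isUnit_det A).mp hAinv
  -- invertibility of XᵀX
  have hXXdet : IsUnit (Xᵀ * X).det := by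
    rw [isUnit_iff_ne_zero]
    intro hdet0
    obtain ⟨v, hv0, hv⟩ := (Matrix.exists_mulVec_eq_zero_iff).mpr hdet0
    have hXv : X *ᵥ v = 0 := by
      have h1 : v ⬝ᵥ ((Xᵀ * X) *ᵥ v) = 0 := by rw [hv, dotProduct_zero]
      rw [← Matrix.mulVec_mulVec, Matrix.dotProduct_mulVec, Matrix.vecMul_transpose] at h1
      exact dotProduct_self_eq_zero.mp h1
    have hJv : J *ᵥ v = 0 := by
      rw [← hX, ← Matrix.mulVec_mulVec, ← Matrix.mulVec_mulVec, hXv,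
        Matrix.mulVec_zero, Matrix.mulVec_zero]
    have : v = 0 := by
      have := congrArg (fun w => J *ᵥ w) hJv
      simpa [Matrix.mulVec_mulVec, hJ2, Matrix.mulVec_zero] using this
    exact hv0 this
  have hMXX : M * (Xᵀ * X) = 1 := by rw [hM]; exact Matrix.nonsing_inv_mul _ hXXdet
  have hXXM : (Xᵀ * X) * M = 1 := by rw [hM]; exact Matrix.mul_nonsing_inv _ hXXdet
  have hMT : Mᵀ = M := by
    rw [hM, Matrix.transpose_nonsing_inv, Matrix.transpose_mul, Matrix.transpose_transpose]
  have hAiT : A⁻¹ᵀ = A⁻¹ := by rw [Matrix.transpose_nonsing_inv, hA]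
  have hAA : A * A⁻¹ = 1 := Matrix.mul_nonsing_inv _ hdet
  have hA'A : A⁻¹ * A = 1 := Matrix.nonsing_inv_mul _ hdet
  -- cancellation rules with a trailing factor
  have r1 : ∀ {k : ℕ} (Y : Matrix (Fin n) (Fin k) ℝ), A⁻¹ * (A * Y) = Y :=
    fun Y => cancel_aux _ _ hA'A Y
  have r2 : ∀ {k : ℕ} (Y : Matrix (Fin n) (Fin k) ℝ), A * (A⁻¹ * Y) = Y :=
    fun Y => cancel_aux _ _ hAA Y
  have b3 : Xᵀ * (A * X) = J := by rw [← Matrix.mul_assoc, hX]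
  have r3 : ∀ {k : ℕ} (Y : Matrix (Fin p) (Fin k) ℝ), Xᵀ * (A * (X * Y)) = J * Y := by
    intro k Y
    rw [← Matrix.mul_assoc, ← Matrix.mul_assoc, Matrix.mul_assoc _ A X, b3]
  have r4 : ∀ {k : ℕ} (Y : Matrix (Fin p) (Fin k) ℝ), J * (J * Y) = Y :=
    fun Y => cancel_aux _ _ hJ2 Y
  have b5 : M * (Xᵀ * X) = 1 := hMXX
  have r5 : ∀ {k : ℕ} (Y : Matrix (Fin p) (Fin k) ℝ), M * (Xᵀ * (X * Y)) = Y := by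
    intro k Y
    rw [← Matrix.mul_assoc, ← Matrix.mul_assoc, Matrix.mul_assoc M Xᵀ X, hMXX, Matrix.one_mul]
  have b6 : Xᵀ * (X * M) = 1 := by rw [← Matrix.mul_assoc, hXXM]
  have r6 : ∀ {k : ℕ} (Y : Matrix (Fin p) (Fin k) ℝ), Xᵀ * (X * (M * Y)) = Y := by
    intro k Y
    rw [← Matrix.mul_assoc, ← Matrix.mul_assoc, Matrix.mul_assoc Xᵀ X M, b6, Matrix.one_mul]
  -- skew-symmetry rules
  have hξ' : ξᵀ * A * X = -(Xᵀ * A * ξ) := eq_neg_of_add_eq_zero_left hξ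
  have hη' : ηᵀ * A * X = -(Xᵀ * A * η) := eq_neg_of_add_eq_zero_left hη
  have b7 : ξᵀ * (A * X) = -(Xᵀ * (A * ξ)) := by
    rw [← Matrix.mul_assoc, ← Matrix.mul_assoc, hξ']
  have r7 : ∀ {k : ℕ} (Y : Matrix (Fin p) (Fin k) ℝ),
      ξᵀ * (A * (X * Y)) = -(Xᵀ * (A * (ξ * Y))) := by
    intro k Y
    rw [← Matrix.mul_assoc, ← Matrix.mul_assoc, Matrix.mul_assoc _ A X, b7,
      Matrix.neg_mul, Matrix.mul_assoc, Matrix.mul_assoc]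
  have b8 : ηᵀ * (A * X) = -(Xᵀ * (A * η)) := by
    rw [← Matrix.mul_assoc, ← Matrix.mul_assoc, hη']
  have r8 : ∀ {k : ℕ} (Y : Matrix (Fin p) (Fin k) ℝ),
      ηᵀ * (A * (X * Y)) = -(Xᵀ * (A * (η * Y))) := by
    intro k Y
    rw [← Matrix.mul_assoc, ← Matrix.mul_assoc, Matrix.mul_assoc _ A X, b8,
      Matrix.neg_mul, Matrix.mul_assoc, Matrix.mul_assoc]
  have hρ' : ρ ≠ 0 := ne_of_gt hρ
  simp only [hP, hB, hB', hD, hE, hS, hPi, hΩξ, hΩη, msym,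
    Matrix.mul_add, Matrix.add_mul, Matrix.mul_sub, Matrix.sub_mul,
    Matrix.mul_smul, Matrix.smul_mul, Matrix.mul_one, Matrix.one_mul,
    Matrix.mul_neg, Matrix.neg_mul, Matrix.transpose_mul, Matrix.transpose_add,
    Matrix.transpose_sub, Matrix.transpose_smul, Matrix.transpose_neg,
    Matrix.transpose_transpose, Matrix.transpose_one, hA, hJ, hMT, hAiT,
    smul_add, smul_sub, smul_neg, smul_smul, neg_neg, neg_add,
    Matrix.mul_assoc, r1, r2, r3, r4, r5, r6, r7, r8,
    b3, hJ2, b5, b6, b7, b8, hAA, hA'A]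
  match_scalars <;> field_simp <;> ring
end

section
/- Let A be an n×n symmetric real matrix, J a p×p symmetric real matrix, and ρ > 0. Define the map F from n×p real matrices to n×n real matrices by F(X) := ρ⁻¹·A X Xᵀ A + (A − A X J Xᵀ A)·(A − A X J Xᵀ A). Then F is Fréchet differentiable at every X, and its derivative in a direction ζ (an n×p matrix) is DF(X)[ζ] = (2/ρ)·A·sym(Xζᵀ)·A − 4·sym(A·sym(XJζᵀ)·A·S_X), where S_X := A − A X J Xᵀ A. -/
/-!
For symmetric `M`, the derivative of `Y ↦ B Y M Yᵀ C` at `X` is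
`ζ ↦ B (ζ M Xᵀ + X M ζᵀ) C = 2 B sym(X M ζᵀ) C`, because `ζ M Xᵀ = (X M ζᵀ)ᵀ`. Both terms of `G¹`
are built from such maps, and by the product rule the derivative of `S_X²` is
`DS·S + S·DS = 2 sym(DS·S)`, since `S_X` and `DS = -2 A sym(X J ζᵀ) A` are both symmetric.
-/

open Matrix

attribute [local instance] Matrix.normedAddCommGroup Matrix.normedSpace

section SymmetricPart

variable {m : Type*}

theorem two_smul_msym (S : Matrix m m ℝ) : (2 : ℝ) • msym S = S + Sᵀ := by
  rw [msym, smul_smul]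
  norm_num

theorem transpose_msym (S : Matrix m m ℝ) : (msym S)ᵀ = msym S := by
  rw [msym, transpose_smul, transpose_add, transpose_transpose, add_comm]

theorem two_smul_msym_mul [Fintype m] {S T : Matrix m m ℝ} (hS : Sᵀ = S) (hT : Tᵀ = T) :
    (2 : ℝ) • msym (S * T) = S * T + T * S := by
  rw [two_smul_msym, transpose_mul, hS, hT]

end SymmetricPart

namespace Matrix

variable (𝕜 : Type*) [NontriviallyNormedField 𝕜] [CompleteSpace 𝕜]

noncomputable def mulLeftCLM {l m : Type*} (n : Type*) [Fintype m] [Fintype n]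
    (P : Matrix l m 𝕜) : Matrix m n 𝕜 →L[𝕜] Matrix l n 𝕜 :=
  (mulLeftLinearMap n 𝕜 P).toContinuousLinearMap

noncomputable def mulRightCLM (l : Type*) {m n : Type*} [Fintype l] [Fintype m]
    (Q : Matrix m n 𝕜) : Matrix l m 𝕜 →L[𝕜] Matrix l n 𝕜 :=
  (mulRightLinearMap l 𝕜 Q).toContinuousLinearMap

noncomputable def transposeCLM (m n : Type*) [Fintype m] [Fintype n] :
    Matrix m n 𝕜 →L[𝕜] Matrix n m 𝕜 :=
  (transposeLinearEquiv m n 𝕜 𝕜).toLinearMap.toContinuousLinearMap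

end Matrix

section ProductRule

variable {𝕜 : Type*} [NontriviallyNormedField 𝕜] [CompleteSpace 𝕜]
  {l m n : Type*} [Fintype l] [Fintype m] [Fintype n]
  {E : Type*} [NormedAddCommGroup E] [NormedSpace 𝕜 E] {x : E}

theorem HasFDerivAt.matrix_mul {f : E → Matrix l m 𝕜} {g : E → Matrix m n 𝕜}
    {f' : E →L[𝕜] Matrix l m 𝕜} {g' : E →L[𝕜] Matrix m n 𝕜}
    (hf : HasFDerivAt f f' x) (hg : HasFDerivAt g g' x) :
    HasFDerivAt (fun y ↦ f y * g y)
      ((mulLeftCLM 𝕜 n (f x)).comp g' + (mulRightCLM 𝕜 l (g x)).comp f') x := by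
  exact (mulLinearMap 𝕜).toContinuousBilinearMap.hasFDerivAt_of_bilinear hf hg

theorem HasFDerivAt.const_matrix_mul {f : E → Matrix m n 𝕜} {f' : E →L[𝕜] Matrix m n 𝕜}
    (hf : HasFDerivAt f f' x) (P : Matrix l m 𝕜) :
    HasFDerivAt (fun y ↦ P * f y) ((mulLeftCLM 𝕜 n P).comp f') x := by
  exact (mulLeftCLM 𝕜 n P).hasFDerivAt.comp x hf

theorem HasFDerivAt.matrix_mul_const {f : E → Matrix l m 𝕜} {f' : E →L[𝕜] Matrix l m 𝕜}
    (hf : HasFDerivAt f f' x) (Q : Matrix m n 𝕜) :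
    HasFDerivAt (fun y ↦ f y * Q) ((mulRightCLM 𝕜 l Q).comp f') x := by
  exact (mulRightCLM 𝕜 l Q).hasFDerivAt.comp x hf

theorem HasFDerivAt.matrix_transpose {f : E → Matrix m n 𝕜} {f' : E →L[𝕜] Matrix m n 𝕜}
    (hf : HasFDerivAt f f' x) :
    HasFDerivAt (fun y ↦ (f y)ᵀ) ((transposeCLM 𝕜 m n).comp f') x := by
  exact (transposeCLM 𝕜 m n).hasFDerivAt.comp x hf

end ProductRule

theorem exists_hasFDerivAt_mul_mul_transpose_mul {k n p k' : Type*} [Fintype k] [Fintype n]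
    [Fintype p] [Fintype k'] (B : Matrix k n ℝ) {M : Matrix p p ℝ} (hM : Mᵀ = M)
    (C : Matrix n k' ℝ) (X : Matrix n p ℝ) :
    ∃ L : Matrix n p ℝ →L[ℝ] Matrix k k' ℝ, HasFDerivAt (fun Y ↦ B * Y * M * Yᵀ * C) L X ∧
      ∀ ζ, L ζ = (2 : ℝ) • (B * msym (X * M * ζᵀ) * C) := by
  have hid := hasFDerivAt_id (𝕜 := ℝ) X
  refine ⟨_, ((((hid.const_matrix_mul B).matrix_mul_const M).matrix_mul
    hid.matrix_transpose).matrix_mul_const C), fun ζ ↦ ?_⟩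
  -- The derivative is evaluated by unfolding: its domain carries the normed topology while `L`'s
  -- type carries the product topology, so the `ContinuousLinearMap` simp lemmas do not match.
  change (B * X * M * ζᵀ + B * ζ * M * Xᵀ) * C = _
  rw [← Matrix.smul_mul, ← Matrix.mul_smul, two_smul_msym, transpose_mul, transpose_mul,
    transpose_transpose, hM]
  simp only [Matrix.mul_add, Matrix.add_mul, Matrix.mul_assoc, add_comm]

theorem G1_hasFDerivAt_general
    (n p : ℕ)
    (A : Matrix (Fin n) (Fin n) ℝ) (hA : Aᵀ = A)
    (J : Matrix (Fin p) (Fin p) ℝ) (hJ : Jᵀ = J)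
    (ρ : ℝ)
    (F : Matrix (Fin n) (Fin p) ℝ → Matrix (Fin n) (Fin n) ℝ)
    (hF : ∀ X, F X = ρ⁻¹ • (A * X * Xᵀ * A)
      + (A - A * X * J * Xᵀ * A) * (A - A * X * J * Xᵀ * A)) :
    ∀ X : Matrix (Fin n) (Fin p) ℝ,
      ∃ F' : Matrix (Fin n) (Fin p) ℝ →L[ℝ] Matrix (Fin n) (Fin n) ℝ,
        HasFDerivAt F F' X ∧
          ∀ ζ : Matrix (Fin n) (Fin p) ℝ,
            F' ζ = (2 / ρ) • (A * msym (X * ζᵀ) * A)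
              - (4 : ℝ) • msym (A * msym (X * J * ζᵀ) * A * (A - A * X * J * Xᵀ * A)) := by
  intro X
  obtain ⟨LG, hG, hLG⟩ := exists_hasFDerivAt_mul_mul_transpose_mul A transpose_one A X
  obtain ⟨LQ, hQ, hLQ⟩ := exists_hasFDerivAt_mul_mul_transpose_mul A hJ A X
  simp only [Matrix.mul_one] at hG hLG
  have hS := hQ.const_sub A
  set S := A - A * X * J * Xᵀ * A
  have hSsymm : Sᵀ = S := by
    simp only [S, transpose_sub, transpose_mul, transpose_transpose, hA, hJ, Matrix.mul_assoc]
  rw [show F = _ from funext hF]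
  refine ⟨_, (hG.const_smul ρ⁻¹).add (hS.matrix_mul hS), fun ζ ↦ ?_⟩
  change ρ⁻¹ • LG ζ + (S * -LQ ζ + -LQ ζ * S) = _
  have hQsymm : (A * msym (X * J * ζᵀ) * A)ᵀ = A * msym (X * J * ζᵀ) * A := by
    rw [transpose_mul, transpose_mul, transpose_msym, hA, ← Matrix.mul_assoc]
  rw [hLG, hLQ, show (4 : ℝ) = 2 * 2 by norm_num, mul_smul, two_smul_msym_mul hQsymm hSsymm,
    smul_smul, div_eq_inv_mul]
  simp only [Matrix.mul_neg, Matrix.neg_mul, Matrix.mul_smul, Matrix.smul_mul, smul_add]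
  abel

/-- The metric matrix map `X ↦ G¹_X` is Fréchet differentiable with derivative
`DG¹(X)[ζ] = (2/ρ)·A·sym(Xζᵀ)·A − 4·sym(A·sym(XJζᵀ)·A·S_X)`. -/
theorem G1_hasFDerivAt
    (n p : ℕ) (hpn : p ≤ n)
    (A : Matrix (Fin n) (Fin n) ℝ) (hA : Aᵀ = A)
    (J : Matrix (Fin p) (Fin p) ℝ) (hJ : Jᵀ = J)
    (ρ : ℝ) (hρ : 0 < ρ)
    (F : Matrix (Fin n) (Fin p) ℝ → Matrix (Fin n) (Fin n) ℝ)
    (hF : ∀ X, F X = ρ⁻¹ • (A * X * Xᵀ * A)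
      + (A - A * X * J * Xᵀ * A) * (A - A * X * J * Xᵀ * A)) :
    ∀ X : Matrix (Fin n) (Fin p) ℝ,
      ∃ F' : Matrix (Fin n) (Fin p) ℝ →L[ℝ] Matrix (Fin n) (Fin n) ℝ,
        HasFDerivAt F F' X ∧
          ∀ ζ : Matrix (Fin n) (Fin p) ℝ,
            F' ζ = (2 / ρ) • (A * msym (X * ζᵀ) * A)
              - (4 : ℝ) • msym (A * msym (X * J * ζᵀ) * A * (A - A * X * J * Xᵀ * A)) :=
  G1_hasFDerivAt_general n p A hA J hJ ρ F hF
end
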